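/- arXiv:2412.20569 — 4 statements merged into one kernel-verified Lean document; each statement's English description precedes it below -/
import Mathlib

section
/- For every fixed σ ≥ 0 and β, γ > 0 satisfying β > γ(1+σ), and for every c satisfying c ≥ 2·√((β − (1+σ)γ)/(1+σ)), the planar system I'(y) = V(y), V'(y) = −c·V(y) − β·I(y)·((1 − I(y) − V(y)/c)/(1 + σ·(1 − I(y) − V(y)/c)) − γ/β) has a heteroclinic orbit connecting the saddle Ā = (1 − γ/(β−σγ), 0) and the node B̄ = (0, 0): there exist continuously differentiable functions I, V : ℝ → ℝ satisfying the system for all y ∈ ℝ with (I(y), V(y)) → (1 − γ/(β−σγ), 0) as y → −∞ and (I(y), V(y)) → (0, 0) as y → +∞. -/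
/-!
In the coordinates `(I, J)` with `J = I + V / c`, the system becomes `I' = c (J - I)`,
`J' = -(b / c) I (A - J) / (1 + σ (1 - J))` with `b = β - σγ` and `A = 1 - γ / b`. The triangle
`I ≤ A, J ≤ I ≤ 2J` with corners `(0, 0)`, `(A, A)`, `(A, A / 2)` is forward invariant: the field
points strictly inwards on its edges, and on the edge `I = 2J` this is precisely the speed bound
`c² ≥ 4bA / (1 + σ)`. Inside it both `I` and `J` decrease. By Grönwall's inequality, orbits that
start inside the triangle close to the saddle `(A, A)` need arbitrarily long to reach the section
`I = 3A / 4`; a nested-compact-sets argument then gives a point on the section whose whole orbit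
stays in the triangle. Being monotone and bounded, that orbit converges at `±∞` to equilibria,
which can only be `(A, A)` at `-∞` and `(0, 0)` at `+∞`. Clamping the field outside `[0, A]²`
makes it globally Lipschitz and bounded, so that all orbits exist for all times.
-/

open Set Filter Topology
open scoped NNReal

section Calculus

variable {E F : Type*} [NormedAddCommGroup E] [NormedSpace ℝ E] [NormedAddCommGroup F]
  [NormedSpace ℝ F]

theorem HasDerivAt.fst {f : ℝ → E × F} {f' : E × F} {t : ℝ} (h : HasDerivAt f f' t) :
    HasDerivAt (fun s ↦ (f s).1) f'.1 t :=
  (ContinuousLinearMap.fst ℝ E F).hasFDerivAt.comp_hasDerivAt t h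

theorem HasDerivAt.snd {f : ℝ → E × F} {f' : E × F} {t : ℝ} (h : HasDerivAt f f' t) :
    HasDerivAt (fun s ↦ (f s).2) f'.2 t :=
  (ContinuousLinearMap.snd ℝ E F).hasFDerivAt.comp_hasDerivAt t h

theorem HasDerivAt.eventually_nhdsGT_nonpos {f : ℝ → ℝ} {f' t : ℝ} (hf : HasDerivAt f f' t)
    (h₀ : f t ≤ 0) (h₁ : f t = 0 → f' < 0) : ∀ᶠ s in 𝓝[>] t, f s ≤ 0 := by
  rcases h₀.lt_or_eq with h | h
  · exact ((hf.continuousAt.eventually (gt_mem_nhds h)).filter_mono nhdsWithin_le_nhds).mono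
      fun _ ↦ le_of_lt
  · filter_upwards [hf.hasDerivWithinAt.limsup_slope_le' (lt_irrefl t) (h₁ h),
      self_mem_nhdsWithin] with s hs hts
    rw [slope_def_field, h, sub_zero, div_lt_iff₀ (sub_pos.2 hts), zero_mul] at hs
    exact hs.le

theorem IsClosed.mapsTo_Ici_of_forall_eventually_nhdsGT {X : Type*} [TopologicalSpace X]
    {γ : ℝ → X} {S : Set X} (hS : IsClosed S) (hγ : Continuous γ) {a : ℝ} (ha : γ a ∈ S)
    (h : ∀ t ≥ a, γ t ∈ S → ∀ᶠ s in 𝓝[>] t, γ s ∈ S) : MapsTo γ (Ici a) S := fun _ ht ↦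
  ((hS.preimage hγ).inter isClosed_Icc).Icc_subset_of_forall_mem_nhdsWithin ha
    (fun s hs ↦ h s hs.2.1 hs.1) ⟨ht, le_rfl⟩

end Calculus

section Monotone

variable {ι α β : Type*} [Preorder ι] [ConditionallyCompleteLinearOrder α] [TopologicalSpace α]
  [OrderTopology α] [ConditionallyCompleteLinearOrder β] [TopologicalSpace β] [OrderTopology β]
  {f : ι → α × β}

theorem Antitone.exists_le_tendsto_atTop (hf : Antitone f) (hb : BddBelow (range f)) :
    ∃ e, (∀ i, e ≤ f i) ∧ Tendsto f atTop (𝓝 e) := by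
  obtain ⟨m, hm⟩ := hb
  have hb₁ : BddBelow (range fun i ↦ (f i).1) := ⟨m.1, by rintro _ ⟨i, rfl⟩; exact (hm ⟨i, rfl⟩).1⟩
  have hb₂ : BddBelow (range fun i ↦ (f i).2) := ⟨m.2, by rintro _ ⟨i, rfl⟩; exact (hm ⟨i, rfl⟩).2⟩
  refine ⟨(⨅ i, (f i).1, ⨅ i, (f i).2), fun i ↦ ⟨ciInf_le hb₁ i, ciInf_le hb₂ i⟩, ?_⟩
  exact (tendsto_atTop_ciInf (fun i j h ↦ (hf h).1) hb₁).prodMk_nhds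
    (tendsto_atTop_ciInf (fun i j h ↦ (hf h).2) hb₂)

theorem Antitone.exists_ge_tendsto_atBot (hf : Antitone f) (hb : BddAbove (range f)) :
    ∃ e, (∀ i, f i ≤ e) ∧ Tendsto f atBot (𝓝 e) := by
  obtain ⟨m, hm⟩ := hb
  have hb₁ : BddAbove (range fun i ↦ (f i).1) := ⟨m.1, by rintro _ ⟨i, rfl⟩; exact (hm ⟨i, rfl⟩).1⟩
  have hb₂ : BddAbove (range fun i ↦ (f i).2) := ⟨m.2, by rintro _ ⟨i, rfl⟩; exact (hm ⟨i, rfl⟩).2⟩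
  refine ⟨(⨆ i, (f i).1, ⨆ i, (f i).2), fun i ↦ ⟨le_ciSup hb₁ i, le_ciSup hb₂ i⟩, ?_⟩
  exact (tendsto_atBot_ciSup (fun i j h ↦ (hf h).1) hb₁).prodMk_nhds
    (tendsto_atBot_ciSup (fun i j h ↦ (hf h).2) hb₂)

end Monotone

section Flow

variable {E : Type*} [NormedAddCommGroup E] [NormedSpace ℝ E] {v : E → E} {K : ℝ≥0}

structure IsGlobalFlow (v : E → E) (φ : E → ℝ → E) : Prop where
  apply_zero : ∀ x, φ x 0 = x
  hasDerivAt : ∀ x t, HasDerivAt (φ x) (v (φ x t)) t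

theorem exists_forall_mem_Ioo_hasDerivAt_of_lipschitzWith [CompleteSpace E]
    (hv : LipschitzWith K v) {C : ℝ} (hC : ∀ x, ‖v x‖ ≤ C) (x₀ : E) {T : ℝ} (hT : 0 ≤ T) :
    ∃ γ : ℝ → E, γ 0 = x₀ ∧ ∀ t ∈ Ioo (-T) T, HasDerivAt γ (v (γ t)) t := by
  have hC₀ : 0 ≤ C := (norm_nonneg _).trans (hC x₀)
  have hpl : IsPicardLindelof (fun _ ↦ v) (tmin := -T) (tmax := T) ⟨0, by simp [hT]⟩ x₀
      ⟨C * T, by positivity⟩ 0 ⟨C, hC₀⟩ K :=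
    .of_time_independent (fun x _ ↦ hC x) hv.lipschitzOnWith (by simp; rfl)
  obtain ⟨γ, hγ₀, hγ⟩ := hpl.exists_eq_forall_mem_Icc_hasDerivWithinAt₀
  exact ⟨γ, hγ₀, fun t ht ↦ (hγ t (Ioo_subset_Icc_self ht)).hasDerivAt (Icc_mem_nhds ht.1 ht.2)⟩

theorem exists_forall_hasDerivAt_of_lipschitzWith [CompleteSpace E] (hv : LipschitzWith K v)
    {C : ℝ} (hC : ∀ x, ‖v x‖ ≤ C) (x₀ : E) :
    ∃ γ : ℝ → E, γ 0 = x₀ ∧ ∀ t, HasDerivAt γ (v (γ t)) t := by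
  choose α hα₀ hα using fun n : ℕ ↦
    exists_forall_mem_Ioo_hasDerivAt_of_lipschitzWith hv hC x₀ n.cast_nonneg
  have hagree : ∀ m n : ℕ, ∀ t : ℝ, |t| < m → |t| < n → α m t = α n t := by
    intro m n t hm hn
    set r : ℝ := min m n
    have hsol : ∀ k : ℕ, r ≤ k → ∀ s ∈ Ioo (-r) r,
        HasDerivAt (α k) (v (α k s)) s ∧ α k s ∈ univ :=
      fun k hk s hs ↦ ⟨hα k s ⟨by linarith [hs.1], by linarith [hs.2]⟩, trivial⟩
    have hr : |t| < r := lt_min hm hn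
    exact ODE_solution_unique_of_mem_Ioo (v := fun _ ↦ v) (fun _ _ ↦ hv.lipschitzOnWith)
      (t₀ := 0) ⟨by linarith [abs_nonneg t], by linarith [abs_nonneg t]⟩
      (hsol m (min_le_left _ _)) (hsol n (min_le_right _ _)) (by rw [hα₀, hα₀]) (abs_lt.1 hr)
  refine ⟨fun t ↦ α (⌈|t|⌉₊ + 1) t, hα₀ _, fun t ↦ ?_⟩
  have hN : |t| < (⌈|t|⌉₊ + 1 : ℕ) := by push_cast; linarith [Nat.le_ceil |t|]
  have hev : (fun s ↦ α (⌈|s|⌉₊ + 1) s) =ᶠ[𝓝 t] α (⌈|t|⌉₊ + 1) := by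
    filter_upwards [(isOpen_lt continuous_abs continuous_const).mem_nhds hN] with s hs
    exact hagree _ _ s (by push_cast; linarith [Nat.le_ceil |s|]) hs
  exact (hα _ t (abs_lt.1 hN)).congr_of_eventuallyEq hev

theorem exists_isGlobalFlow [CompleteSpace E] (hv : LipschitzWith K v) {C : ℝ}
    (hC : ∀ x, ‖v x‖ ≤ C) : ∃ φ, IsGlobalFlow v φ := by
  choose φ hφ₀ hφ using exists_forall_hasDerivAt_of_lipschitzWith hv hC
  exact ⟨φ, hφ₀, hφ⟩

namespace IsGlobalFlow

variable {φ : E → ℝ → E}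

theorem continuous (hφ : IsGlobalFlow v φ) (x : E) : Continuous (φ x) :=
  continuous_iff_continuousAt.2 fun t ↦ (hφ.hasDerivAt x t).continuousAt

theorem contDiff_one (hφ : IsGlobalFlow v φ) (hv : Continuous v) (x : E) :
    ContDiff ℝ 1 (φ x) := by
  have hderiv : deriv (φ x) = fun t ↦ v (φ x t) := funext fun t ↦ (hφ.hasDerivAt x t).deriv
  exact contDiff_one_iff_deriv.2 ⟨fun t ↦ (hφ.hasDerivAt x t).differentiableAt,
    hderiv ▸ hv.comp (hφ.continuous x)⟩

theorem eq_of_hasDerivAt (hφ : IsGlobalFlow v φ) (hv : LipschitzWith K v) {γ : ℝ → E}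
    (hγ : ∀ t, HasDerivAt γ (v (γ t)) t) : γ = φ (γ 0) :=
  ODE_solution_unique_univ (v := fun _ ↦ v) (s := fun _ ↦ univ) (t₀ := 0)
    (fun _ ↦ hv.lipschitzOnWith) (fun t ↦ ⟨hγ t, trivial⟩)
    (fun t ↦ ⟨hφ.hasDerivAt _ t, trivial⟩) (hφ.apply_zero _).symm

theorem apply_add (hφ : IsGlobalFlow v φ) (hv : LipschitzWith K v) (x : E) (s t : ℝ) :
    φ x (s + t) = φ (φ x s) t := by
  have := hφ.eq_of_hasDerivAt hv fun t ↦ (hφ.hasDerivAt x (s + t)).comp_const_add s t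
  simpa using congrFun this t

theorem apply_eq_self (hφ : IsGlobalFlow v φ) (hv : LipschitzWith K v) {x : E} (hx : v x = 0)
    (t : ℝ) : φ x t = x :=
  (congrFun (hφ.eq_of_hasDerivAt hv (γ := fun _ ↦ x) fun _ ↦ hx ▸ hasDerivAt_const _ x) t).symm

theorem neg (hφ : IsGlobalFlow v φ) : IsGlobalFlow (-v) fun x t ↦ φ x (-t) where
  apply_zero x := by simpa using hφ.apply_zero x
  hasDerivAt x t := by
    simpa [Function.comp_def] using (hφ.hasDerivAt x (-t)).scomp t (hasDerivAt_neg t)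

theorem dist_le_of_nonneg (hφ : IsGlobalFlow v φ) (hv : LipschitzWith K v) (x y : E) {t : ℝ}
    (ht : 0 ≤ t) : dist (φ x t) (φ y t) ≤ dist x y * Real.exp (K * t) := by
  have := dist_le_of_trajectories_ODE (v := fun _ ↦ v) (fun _ ↦ hv)
    (hφ.continuous x).continuousOn (fun s _ ↦ (hφ.hasDerivAt x s).hasDerivWithinAt)
    (hφ.continuous y).continuousOn (fun s _ ↦ (hφ.hasDerivAt y s).hasDerivWithinAt)
    (a := 0) (b := t) (by rw [hφ.apply_zero, hφ.apply_zero]) t ⟨ht, le_rfl⟩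
  simpa using this

theorem dist_le (hφ : IsGlobalFlow v φ) (hv : LipschitzWith K v) (x y : E) (t : ℝ) :
    dist (φ x t) (φ y t) ≤ dist x y * Real.exp (K * |t|) := by
  rcases le_total 0 t with ht | ht
  · simpa [abs_of_nonneg ht] using hφ.dist_le_of_nonneg hv x y ht
  · simpa [abs_of_nonpos ht] using hφ.neg.dist_le_of_nonneg hv.neg x y (neg_nonneg.2 ht)

theorem continuous_apply (hφ : IsGlobalFlow v φ) (hv : LipschitzWith K v) (t : ℝ) :
    Continuous fun x ↦ φ x t :=
  (LipschitzWith.of_dist_le' fun x y ↦ (hφ.dist_le hv x y t).trans_eq (mul_comm _ _)).continuous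

theorem eq_zero_of_tendsto (hφ : IsGlobalFlow v φ) (hv : LipschitzWith K v) {l : Filter ℝ}
    [l.NeBot] (hl : ∀ s, Tendsto (· + s) l l) {x e : E} (h : Tendsto (φ x) l (𝓝 e)) :
    v e = 0 := by
  have hconst : φ e = fun _ ↦ e := funext fun s ↦ tendsto_nhds_unique
    (((hφ.continuous_apply hv s).tendsto e).comp h)
    (by simpa only [Function.comp_def, hφ.apply_add hv] using h.comp (hl s))
  simpa [hconst] using (hφ.hasDerivAt e 0).unique (hconst ▸ hasDerivAt_const 0 e)

end IsGlobalFlow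

end Flow

noncomputable section

structure SISReduced where
  σ : ℝ
  b : ℝ
  A : ℝ
  c : ℝ
  hσ : 0 ≤ σ
  hb : 0 < b
  hA : 0 < A
  hA₁ : A < 1
  hc : 0 < c
  speed : 4 * b * A ≤ (1 + σ) * c ^ 2

namespace SISReduced

variable (P : SISReduced)

def growth (J : ℝ) : ℝ := (P.A - J) / (1 + P.σ * (1 - J))

def field (p : ℝ × ℝ) : ℝ × ℝ := (P.c * (p.2 - p.1), -(P.b / P.c) * p.1 * P.growth p.2)

def region : Set (ℝ × ℝ) := {p | p.1 ≤ P.A ∧ p.2 ≤ p.1 ∧ p.1 ≤ 2 * p.2}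

def retract (p : ℝ × ℝ) : ℝ × ℝ := (max 0 (min p.1 P.A), max 0 (min p.2 P.A))

def clampedField (p : ℝ × ℝ) : ℝ × ℝ := P.field (P.retract p)

theorem denom_pos {J : ℝ} (hJ : J ≤ 1) : 0 < 1 + P.σ * (1 - J) := by
  nlinarith [P.hσ]

theorem growth_nonneg {J : ℝ} (hJ : J ≤ P.A) : 0 ≤ P.growth J :=
  div_nonneg (sub_nonneg.2 hJ) (P.denom_pos (hJ.trans P.hA₁.le)).le

theorem growth_self : P.growth P.A = 0 := by simp [growth]

theorem growth_lt_div {J : ℝ} (h₀ : 0 < J) (hJ : J ≤ 1) : P.growth J < P.A / (1 + P.σ) := by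
  rw [growth, div_lt_div_iff₀ (P.denom_pos hJ) (by linarith [P.hσ])]
  nlinarith [P.hσ, P.hA₁, mul_nonneg P.hσ (sub_nonneg.2 P.hA₁.le)]

theorem four_mul_b_mul_growth_lt {J : ℝ} (h₀ : 0 < J) (hJ : J ≤ 1) :
    4 * P.b * P.growth J < P.c ^ 2 := by
  have h₁ : 4 * P.b * (P.A / (1 + P.σ)) ≤ P.c ^ 2 := by
    rw [← mul_div_assoc, div_le_iff₀ (by linarith [P.hσ])]
    linarith [P.speed]
  nlinarith [P.growth_lt_div h₀ hJ, P.hb]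

theorem div_le_growth {J δ : ℝ} (hJ₀ : 0 ≤ J) (hJ : J ≤ P.A - δ) (hδ : 0 ≤ δ) :
    δ / (1 + P.σ) ≤ P.growth J :=
  div_le_div₀ (by linarith) (by linarith) (P.denom_pos (by linarith [P.hA₁]))
    (by nlinarith [P.hσ])

theorem bounds_of_mem_region {p : ℝ × ℝ} (hp : p ∈ P.region) : 0 ≤ p.2 ∧ p.2 ≤ p.1 ∧ p.1 ≤ P.A :=
  ⟨by linarith [hp.2.1, hp.2.2], hp.2.1, hp.1⟩

theorem region_subset_Icc : P.region ⊆ Icc 0 (P.A, P.A) := fun p hp ↦ by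
  obtain ⟨h₀, h₁, h₂⟩ := P.bounds_of_mem_region hp
  exact ⟨⟨by simp; linarith, h₀⟩, ⟨h₂, by simp; linarith⟩⟩

theorem sub_mem_region {δ : ℝ} (hδ : 0 ≤ δ) (hδA : 3 * δ ≤ P.A) :
    (P.A - δ, P.A - 2 * δ) ∈ P.region :=
  ⟨by dsimp only; linarith, by dsimp only; linarith, by dsimp only; linarith⟩

theorem isClosed_region : IsClosed P.region :=
  (isClosed_le continuous_fst continuous_const).inter
    ((isClosed_le continuous_snd continuous_fst).inter
      (isClosed_le continuous_fst (continuous_const.mul continuous_snd)))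

theorem isCompact_region : IsCompact P.region :=
  isCompact_Icc.of_isClosed_subset P.isClosed_region P.region_subset_Icc

theorem field_zero : P.field 0 = 0 := by simp [field]

theorem field_self : P.field (P.A, P.A) = 0 := by simp [field, growth_self]

theorem eq_zero_or_eq_of_field_eq_zero {p : ℝ × ℝ} (hp : p ∈ P.region) (h : P.field p = 0) :
    p = 0 ∨ p = (P.A, P.A) := by
  obtain ⟨h₁, h₂⟩ := Prod.ext_iff.1 h
  simp only [field, Prod.fst_zero, Prod.snd_zero, mul_eq_zero, neg_eq_zero, div_eq_zero_iff,
    P.hb.ne', P.hc.ne', sub_eq_zero, or_false, false_or] at h₁ h₂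
  obtain h₂ | h₂ := h₂
  · exact .inl (Prod.ext h₂ (h₁.trans h₂))
  · rw [growth, div_eq_zero_iff, sub_eq_zero] at h₂
    obtain h₂ | h₂ := h₂
    · exact .inr (Prod.ext (h₁ ▸ h₂.symm) h₂.symm)
    · exact absurd h₂ (P.denom_pos (by linarith [(P.bounds_of_mem_region hp).2.2, P.hA₁])).ne'

theorem field_fst_nonpos {p : ℝ × ℝ} (hp : p ∈ P.region) : (P.field p).1 ≤ 0 :=
  mul_nonpos_of_nonneg_of_nonpos P.hc.le (sub_nonpos.2 hp.2.1)

theorem field_snd_nonpos {p : ℝ × ℝ} (hp : p ∈ P.region) : (P.field p).2 ≤ 0 := by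
  obtain ⟨h₀, h₁, h₂⟩ := P.bounds_of_mem_region hp
  have : 0 ≤ P.b / P.c * p.1 * P.growth p.2 :=
    mul_nonneg (mul_nonneg (div_pos P.hb P.hc).le (h₀.trans h₁)) (P.growth_nonneg (h₁.trans h₂))
  simpa [field] using this

theorem field_fst_lt_zero {p : ℝ × ℝ} (hp : p ∈ P.region) (h : p.1 = P.A) (h₀ : P.field p ≠ 0) :
    (P.field p).1 < 0 := by
  refine (P.field_fst_nonpos hp).lt_of_ne fun h₁ ↦ h₀ ?_
  have : p.2 = P.A := by
    simpa [field, P.hc.ne', sub_eq_zero, h] using h₁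
  rw [show p = (P.A, P.A) from Prod.ext h this, field_self]

theorem field_snd_sub_fst_lt_zero {p : ℝ × ℝ} (hp : p ∈ P.region) (h : p.2 = p.1)
    (h₀ : P.field p ≠ 0) : (P.field p).2 - (P.field p).1 < 0 := by
  have h₁ : (P.field p).1 = 0 := by simp [field, h]
  rw [h₁, sub_zero]
  exact (P.field_snd_nonpos hp).lt_of_ne fun h₂ ↦ h₀ (Prod.ext h₁ h₂)

theorem field_fst_sub_two_mul_snd_lt_zero {p : ℝ × ℝ} (hp : p ∈ P.region) (h : p.1 = 2 * p.2)
    (h₀ : P.field p ≠ 0) : (P.field p).1 - 2 * (P.field p).2 < 0 := by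
  obtain ⟨hJ₀, -, hI⟩ := P.bounds_of_mem_region hp
  have hJ : 0 < p.2 := hJ₀.lt_of_ne fun hJ ↦ h₀ <| by
    rw [show p = 0 from Prod.ext (by simp [h, ← hJ]) hJ.symm, field_zero]
  have key : (P.field p).1 - 2 * (P.field p).2 =
      p.2 / P.c * (4 * P.b * P.growth p.2 - P.c ^ 2) := by
    simp only [field, h]
    field_simp [P.hc.ne']
    ring
  rw [key]
  exact mul_neg_of_pos_of_neg (div_pos hJ P.hc)
    (sub_neg.2 (P.four_mul_b_mul_growth_lt hJ (by linarith [P.hA₁])))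

theorem field_snd_le {p : ℝ × ℝ} {a δ : ℝ} (hp : p ∈ P.region) (ha : 0 ≤ a) (hap : a ≤ p.1)
    (hδ : 0 ≤ δ) (hpδ : p.2 ≤ P.A - δ) : (P.field p).2 ≤ -(P.b / P.c * a * (δ / (1 + P.σ))) := by
  have hbc := (div_pos P.hb P.hc).le
  have : P.b / P.c * a * (δ / (1 + P.σ)) ≤ P.b / P.c * p.1 * P.growth p.2 :=
    mul_le_mul (mul_le_mul_of_nonneg_left hap hbc)
      (P.div_le_growth (P.bounds_of_mem_region hp).1 hpδ hδ)
      (div_nonneg hδ (by linarith [P.hσ])) (mul_nonneg hbc (ha.trans hap))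
  simp only [field]
  linarith

theorem retract_mem (p : ℝ × ℝ) : P.retract p ∈ Icc 0 (P.A, P.A) :=
  ⟨⟨le_max_left _ _, le_max_left _ _⟩,
    ⟨max_le P.hA.le (min_le_right _ _), max_le P.hA.le (min_le_right _ _)⟩⟩

theorem clampedField_eq {p : ℝ × ℝ} (hp : p ∈ P.region) : P.clampedField p = P.field p := by
  obtain ⟨h₀, h₁, h₂⟩ := P.bounds_of_mem_region hp
  simp only [clampedField, retract, min_eq_left h₂, min_eq_left (h₁.trans h₂),
    max_eq_right (h₀.trans h₁), max_eq_right h₀]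

theorem contDiffOn_field : ContDiffOn ℝ 1 P.field (Icc 0 (P.A, P.A)) := by
  unfold field growth
  fun_prop (disch := intro p hp; have := hp.2.2; have := P.hσ; have := P.hA₁; nlinarith)

theorem exists_lipschitzWith_clampedField : ∃ K, LipschitzWith K P.clampedField := by
  obtain ⟨K, hK⟩ := P.contDiffOn_field.exists_lipschitzOnWith one_ne_zero (convex_Icc _ _)
    isCompact_Icc
  have hclamp : LipschitzWith 1 fun x : ℝ ↦ max 0 (min x P.A) :=
    (LipschitzWith.id.min_const P.A).const_max 0
  have hretract : LipschitzWith 1 P.retract := by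
    unfold retract
    simpa using (hclamp.comp LipschitzWith.prod_fst).prodMk (hclamp.comp LipschitzWith.prod_snd)
  exact ⟨K * 1, lipschitzOnWith_univ.1 (hK.comp hretract.lipschitzOnWith fun p _ ↦ P.retract_mem p)⟩

theorem exists_bound_clampedField : ∃ C, ∀ p, ‖P.clampedField p‖ ≤ C := by
  obtain ⟨C, hC⟩ := isCompact_Icc.exists_bound_of_continuousOn P.contDiffOn_field.continuousOn
  exact ⟨C, fun p ↦ hC _ (P.retract_mem p)⟩

variable {φ : ℝ × ℝ → ℝ → ℝ × ℝ} {K : ℝ≥0}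

theorem eventually_mem_region (hφ : IsGlobalFlow P.clampedField φ)
    (hK : LipschitzWith K P.clampedField) {x : ℝ × ℝ} {t : ℝ} (hxt : φ x t ∈ P.region) :
    ∀ᶠ s in 𝓝[>] t, φ x s ∈ P.region := by
  by_cases h₀ : P.field (φ x t) = 0
  · have hconst : ∀ s, φ x s = φ x t := fun s ↦ by
      rw [show s = t + (s - t) by ring, hφ.apply_add hK,
        hφ.apply_eq_self hK (by rwa [P.clampedField_eq hxt])]
    exact .of_forall fun s ↦ hconst s ▸ hxt
  have hd := hφ.hasDerivAt x t
  rw [P.clampedField_eq hxt] at hd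
  have d₁ : HasDerivAt (fun s ↦ (φ x s).1 - P.A) (P.field (φ x t)).1 t := hd.fst.sub_const P.A
  have d₂ : HasDerivAt (fun s ↦ (φ x s).2 - (φ x s).1)
      ((P.field (φ x t)).2 - (P.field (φ x t)).1) t := hd.snd.sub hd.fst
  have d₃ : HasDerivAt (fun s ↦ (φ x s).1 - 2 * (φ x s).2)
      ((P.field (φ x t)).1 - 2 * (P.field (φ x t)).2) t := hd.fst.sub (hd.snd.const_mul 2)
  have h₁ := d₁.eventually_nhdsGT_nonpos (by linarith [hxt.1])
    fun h ↦ P.field_fst_lt_zero hxt (by linarith) h₀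
  have h₂ := d₂.eventually_nhdsGT_nonpos (by linarith [hxt.2.1])
    fun h ↦ P.field_snd_sub_fst_lt_zero hxt (by linarith) h₀
  have h₃ := d₃.eventually_nhdsGT_nonpos (by linarith [hxt.2.2])
    fun h ↦ P.field_fst_sub_two_mul_snd_lt_zero hxt (by linarith) h₀
  filter_upwards [h₁, h₂, h₃] with s hs₁ hs₂ hs₃
  exact ⟨by linarith, by linarith, by linarith⟩

theorem mapsTo_region (hφ : IsGlobalFlow P.clampedField φ) (hK : LipschitzWith K P.clampedField)
    {x : ℝ × ℝ} (hx : x ∈ P.region) : MapsTo (φ x) (Ici 0) P.region :=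
  P.isClosed_region.mapsTo_Ici_of_forall_eventually_nhdsGT (hφ.continuous x)
    (by rwa [hφ.apply_zero]) fun _ _ ↦ P.eventually_mem_region hφ hK

theorem antitoneOn_of_mapsTo {γ : ℝ → ℝ × ℝ} (hγ : ∀ t, HasDerivAt γ (P.clampedField (γ t)) t)
    {s : Set ℝ} (hs : Convex ℝ s) (hR : MapsTo γ s P.region) : AntitoneOn γ s := by
  have hcont : Continuous γ := continuous_iff_continuousAt.2 fun t ↦ (hγ t).continuousAt
  have hfield : ∀ t ∈ interior s, P.clampedField (γ t) = P.field (γ t) :=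
    fun t ht ↦ P.clampedField_eq (hR (interior_subset ht))
  have h₁ : AntitoneOn (fun t ↦ (γ t).1) s :=
    antitoneOn_of_hasDerivWithinAt_nonpos hs hcont.fst.continuousOn
      (fun t _ ↦ (hγ t).fst.hasDerivWithinAt)
      fun t ht ↦ hfield t ht ▸ P.field_fst_nonpos (hR (interior_subset ht))
  have h₂ : AntitoneOn (fun t ↦ (γ t).2) s :=
    antitoneOn_of_hasDerivWithinAt_nonpos hs hcont.snd.continuousOn
      (fun t _ ↦ (hγ t).snd.hasDerivWithinAt)
      fun t ht ↦ hfield t ht ▸ P.field_snd_nonpos (hR (interior_subset ht))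
  exact fun a ha b hb hab ↦ Prod.le_def.2 ⟨h₁ ha hb hab, h₂ ha hb hab⟩

theorem exists_fst_le (hφ : IsGlobalFlow P.clampedField φ) (hK : LipschitzWith K P.clampedField)
    {δ : ℝ} (hδ : 0 < δ) (hδA : 4 * δ < P.A) :
    ∃ t ≥ 0, (φ (P.A - δ, P.A - 2 * δ) t).1 ≤ 3 / 4 * P.A := by
  set x₀ : ℝ × ℝ := (P.A - δ, P.A - 2 * δ)
  have hR := P.mapsTo_region hφ hK (P.sub_mem_region hδ.le (by linarith))
  have hanti := P.antitoneOn_of_mapsTo (hφ.hasDerivAt x₀) (convex_Ici 0) hR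
  set ε := P.b / P.c * (3 / 4 * P.A) * (δ / (1 + P.σ))
  have hε : 0 < ε :=
    mul_pos (mul_pos (div_pos P.hb P.hc) (by linarith [P.hA])) (div_pos hδ (by linarith [P.hσ]))
  -- if `I` stayed above `3A/4`, `J` would decrease at rate `≥ ε` and become negative
  by_contra! hI
  have hJ : ∀ t ∈ interior (Ici (0 : ℝ)), deriv (fun s ↦ (φ x₀ s).2) t ≤ -ε := by
    rw [interior_Ici]
    intro t ht
    have ht' : (0 : ℝ) ≤ t := le_of_lt ht
    have hfst : (φ x₀ t).1 ≤ P.A - δ := by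
      simpa [hφ.apply_zero, x₀] using (Prod.le_def.1 (hanti self_mem_Ici ht' ht')).1
    rw [(hφ.hasDerivAt x₀ t).snd.deriv, P.clampedField_eq (hR ht')]
    exact P.field_snd_le (hR ht') (by linarith [P.hA]) (hI t ht').le hδ.le
      ((hR ht').2.1.trans hfst)
  have hslope := (convex_Ici 0).image_sub_le_mul_sub_of_deriv_le (hφ.continuous x₀).snd.continuousOn
    (fun t _ ↦ (hφ.hasDerivAt x₀ t).snd.differentiableAt.differentiableWithinAt) hJ 0
    self_mem_Ici (P.A / ε) (div_pos P.hA hε).le (div_pos P.hA hε).le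
  rw [hφ.apply_zero, mul_sub, mul_zero, sub_zero, neg_mul, mul_div_cancel₀ _ hε.ne'] at hslope
  have := (P.bounds_of_mem_region (hR (show (0 : ℝ) ≤ P.A / ε from (div_pos P.hA hε).le))).1
  simp only [x₀] at hslope
  linarith

theorem exists_fst_eq (hφ : IsGlobalFlow P.clampedField φ) (hK : LipschitzWith K P.clampedField)
    {δ : ℝ} (hδ : 0 < δ) (hδA : 4 * δ < P.A) :
    ∃ T ≥ 0, (φ (P.A - δ, P.A - 2 * δ) T).1 = 3 / 4 * P.A := by
  obtain ⟨t, ht, hle⟩ := P.exists_fst_le hφ hK hδ hδA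
  obtain ⟨T, hT, hTeq⟩ := intermediate_value_Icc' ht (hφ.continuous _).fst.continuousOn
    ⟨hle, by simp only [hφ.apply_zero]; linarith⟩
  exact ⟨T, hT.1, hTeq⟩

theorem le_two_mul_mul_exp_of_fst_eq (hφ : IsGlobalFlow P.clampedField φ)
    (hK : LipschitzWith K P.clampedField) {δ T : ℝ} (hδ : 0 ≤ δ)
    (hT : (φ (P.A - δ, P.A - 2 * δ) T).1 = 3 / 4 * P.A) :
    P.A / 4 ≤ 2 * δ * Real.exp (K * |T|) := by
  have hfix : φ (P.A, P.A) T = (P.A, P.A) :=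
    hφ.apply_eq_self hK
      (by rw [P.clampedField_eq ⟨le_rfl, le_rfl, by linarith [P.hA]⟩, field_self]) T
  have h₀ : dist ((P.A - δ, P.A - 2 * δ) : ℝ × ℝ) (P.A, P.A) = 2 * δ := by
    simp [Prod.dist_eq, abs_of_nonneg hδ]
    linarith
  have h₁ : P.A / 4 ≤ dist (φ (P.A - δ, P.A - 2 * δ) T) (P.A, P.A) := by
    refine le_trans ?_ (le_max_left _ _)
    rw [Real.dist_eq, hT, abs_of_nonpos (by linarith [P.hA])]
    linarith
  calc P.A / 4 ≤ dist (φ (P.A - δ, P.A - 2 * δ) T) (φ (P.A, P.A) T) := by rwa [hfix]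
    _ ≤ _ := hφ.dist_le hK _ _ T
    _ = 2 * δ * Real.exp (K * |T|) := by rw [h₀]

theorem exists_fst_eq_forall_mem_Icc (hφ : IsGlobalFlow P.clampedField φ)
    (hK : LipschitzWith K P.clampedField) (n : ℕ) :
    ∃ q : ℝ × ℝ, q.1 = 3 / 4 * P.A ∧ ∀ s ∈ Icc (-(n : ℝ)) 0, φ q s ∈ P.region := by
  -- starting close enough to the saddle `(A, A)`, the orbit needs time `> n` to reach `I = 3A/4`
  set δ := P.A / 16 * Real.exp (-(K * n))
  have hexp : Real.exp (-(K * n)) ≤ 1 := Real.exp_le_one_iff.2 (by simp; positivity)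
  have hδ : 0 < δ := by have := P.hA; positivity
  have hδA : δ ≤ P.A / 16 := mul_le_of_le_one_right (by linarith [P.hA]) hexp
  obtain ⟨T, hT, hTeq⟩ := P.exists_fst_eq hφ hK hδ (by linarith [P.hA])
  have hTn : (n : ℝ) ≤ T := by
    have h := P.le_two_mul_mul_exp_of_fst_eq hφ hK hδ.le hTeq
    rw [abs_of_nonneg hT, mul_assoc, mul_assoc, ← Real.exp_add] at h
    have : 1 < Real.exp (-(K * n) + K * T) := by nlinarith [P.hA]
    have := pos_of_mul_pos_right (show 0 < (K : ℝ) * (T - n) by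
      linarith [Real.one_lt_exp_iff.1 this]) K.coe_nonneg
    linarith
  refine ⟨φ (P.A - δ, P.A - 2 * δ) T, hTeq, fun s hs ↦ ?_⟩
  rw [← hφ.apply_add hK]
  exact P.mapsTo_region hφ hK (P.sub_mem_region hδ.le (by linarith [P.hA]))
    (show 0 ≤ T + s by linarith [hs.1])

theorem exists_fst_eq_forall_mem_region (hφ : IsGlobalFlow P.clampedField φ)
    (hK : LipschitzWith K P.clampedField) :
    ∃ q : ℝ × ℝ, q.1 = 3 / 4 * P.A ∧ ∀ t, φ q t ∈ P.region := by
  set S : ℕ → Set (ℝ × ℝ) := fun n ↦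
    {q | q.1 = 3 / 4 * P.A ∧ ∀ s ∈ Icc (-(n : ℝ)) 0, φ q s ∈ P.region}
  have hclosed : ∀ n, IsClosed (S n) := fun n ↦ by
    simp only [S, ofPred_and, ofPred_forall]
    exact (isClosed_eq continuous_fst continuous_const).inter
      (isClosed_biInter fun s _ ↦ P.isClosed_region.preimage (hφ.continuous_apply hK s))
  have hmono : ∀ n, S (n + 1) ⊆ S n := fun n q hq ↦
    ⟨hq.1, fun s hs ↦ hq.2 s ⟨by push_cast; linarith [hs.1], hs.2⟩⟩
  have hcpt : IsCompact (S 0) := P.isCompact_region.of_isClosed_subset (hclosed 0)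
    fun q hq ↦ by simpa [hφ.apply_zero] using hq.2 0 (by simp)
  obtain ⟨q, hq⟩ := IsCompact.nonempty_iInter_of_sequence_nonempty_isCompact_isClosed S hmono
    (P.exists_fst_eq_forall_mem_Icc hφ hK) hcpt hclosed
  rw [mem_iInter] at hq
  refine ⟨q, (hq 0).1, fun t ↦ ?_⟩
  rcases le_total 0 t with ht | ht
  · exact P.mapsTo_region hφ hK (by simpa [hφ.apply_zero] using (hq 0).2 0 (by simp)) ht
  · obtain ⟨n, hn⟩ := exists_nat_ge (-t)
    exact (hq n).2 t ⟨by linarith, ht⟩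

theorem eq_zero_or_eq_of_tendsto (hφ : IsGlobalFlow P.clampedField φ)
    (hK : LipschitzWith K P.clampedField) {l : Filter ℝ} [l.NeBot]
    (hl : ∀ s, Tendsto (· + s) l l) {x e : ℝ × ℝ} (hR : ∀ t, φ x t ∈ P.region)
    (h : Tendsto (φ x) l (𝓝 e)) : e = 0 ∨ e = (P.A, P.A) := by
  have he : e ∈ P.region := P.isClosed_region.mem_of_tendsto h (.of_forall hR)
  exact P.eq_zero_or_eq_of_field_eq_zero he (P.clampedField_eq he ▸ hφ.eq_zero_of_tendsto hK hl h)

theorem exists_heteroclinic :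
    ∃ Γ : ℝ → ℝ × ℝ, ContDiff ℝ 1 Γ ∧ (∀ t, Γ t ∈ P.region ∧ HasDerivAt Γ (P.field (Γ t)) t) ∧
      Tendsto Γ atBot (𝓝 (P.A, P.A)) ∧ Tendsto Γ atTop (𝓝 0) := by
  obtain ⟨K, hK⟩ := P.exists_lipschitzWith_clampedField
  obtain ⟨C, hC⟩ := P.exists_bound_clampedField
  obtain ⟨φ, hφ⟩ := exists_isGlobalFlow hK hC
  obtain ⟨q, hq, hR⟩ := P.exists_fst_eq_forall_mem_region hφ hK
  have hq₀ : (φ q 0).1 = 3 / 4 * P.A := by rw [hφ.apply_zero, hq]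
  have hA := P.hA
  have hanti : Antitone (φ q) := antitoneOn_univ.1 <|
    P.antitoneOn_of_mapsTo (hφ.hasDerivAt q) convex_univ fun t _ ↦ hR t
  obtain ⟨eBot, heBot, hbot⟩ := hanti.exists_ge_tendsto_atBot
    ⟨(P.A, P.A), by rintro _ ⟨t, rfl⟩; exact (P.region_subset_Icc (hR t)).2⟩
  obtain ⟨eTop, heTop, htop⟩ := hanti.exists_le_tendsto_atTop
    ⟨0, by rintro _ ⟨t, rfl⟩; exact (P.region_subset_Icc (hR t)).1⟩
  refine ⟨φ q, hφ.contDiff_one hK.continuous q,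
    fun t ↦ ⟨hR t, P.clampedField_eq (hR t) ▸ hφ.hasDerivAt q t⟩, ?_, ?_⟩
  · rcases P.eq_zero_or_eq_of_tendsto hφ hK (fun s ↦ tendsto_atBot_add_const_right _ s tendsto_id)
      hR hbot with rfl | rfl
    · have := (Prod.le_def.1 (heBot 0)).1
      simp only [hq₀, Prod.fst_zero] at this
      linarith
    · exact hbot
  · rcases P.eq_zero_or_eq_of_tendsto hφ hK (fun s ↦ tendsto_atTop_add_const_right _ s tendsto_id)
      hR htop with rfl | rfl
    · exact htop
    · have := (Prod.le_def.1 (heTop 0)).1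
      simp only [hq₀] at this
      linarith

def ofSIS (σ β γ c : ℝ) (hσ : 0 ≤ σ) (hγ : 0 < γ) (hβγ : γ * (1 + σ) < β)
    (hc : 2 * √((β - (1 + σ) * γ) / (1 + σ)) ≤ c) : SISReduced where
  σ := σ
  b := β - σ * γ
  A := 1 - γ / (β - σ * γ)
  c := c
  hσ := hσ
  hb := by nlinarith
  hA := by rw [sub_pos, div_lt_one (by nlinarith)]; nlinarith
  hA₁ := by linarith [div_pos hγ (show 0 < β - σ * γ by nlinarith)]
  hc := lt_of_lt_of_le (mul_pos two_pos (Real.sqrt_pos.2 (div_pos (by linarith) (by linarith)))) hc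
  speed := by
    have hq : 0 ≤ (β - (1 + σ) * γ) / (1 + σ) := div_nonneg (by linarith) (by linarith)
    have h₁ := pow_le_pow_left₀ (by positivity) hc 2
    rw [mul_pow, Real.sq_sqrt hq] at h₁
    have h₂ : (β - σ * γ) * (1 - γ / (β - σ * γ)) = β - (1 + σ) * γ := by
      field_simp [show β - σ * γ ≠ 0 by nlinarith]
      ring
    have h₃ : (1 + σ) * ((β - (1 + σ) * γ) / (1 + σ)) = β - (1 + σ) * γ :=
      mul_div_cancel₀ _ (by linarith)
    rw [mul_assoc, h₂]
    nlinarith [mul_le_mul_of_nonneg_left h₁ (show 0 ≤ 1 + σ by linarith)]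

theorem c_mul_field_snd_sub_fst {β γ : ℝ} (hb : P.b = β - P.σ * γ) (hA : P.A = 1 - γ / P.b)
    {p : ℝ × ℝ} (hp : p ∈ P.region) :
    P.c * ((P.field p).2 - (P.field p).1) =
      -P.c * (P.c * (p.2 - p.1)) - β * p.1 * ((1 - p.1 - P.c * (p.2 - p.1) / P.c) /
        (1 + P.σ * (1 - p.1 - P.c * (p.2 - p.1) / P.c)) - γ / β) := by
  obtain ⟨-, h₁, h₂⟩ := P.bounds_of_mem_region hp
  have hJ := P.denom_pos (h₁.trans (h₂.trans P.hA₁.le))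
  have hγ : 0 < γ := by
    have := P.hA₁
    rw [hA, sub_lt_self_iff] at this
    exact (div_pos_iff_of_pos_right P.hb).1 this
  have hβ : β ≠ 0 := by nlinarith [P.hb, P.hσ]
  rw [mul_div_cancel_left₀ _ P.hc.ne', show 1 - p.1 - (p.2 - p.1) = 1 - p.2 by ring]
  have hb₀ : β - P.σ * γ ≠ 0 := hb ▸ P.hb.ne'
  have hc₀ : P.c ≠ 0 := P.hc.ne'
  simp only [field, growth, hA]
  rw [hb]
  field_simp
  ring

end SISReduced

end

theorem sis_planar_heteroclinic_case3_general
    (σ β γ : ℝ) (hσ : 0 ≤ σ) (hγ : 0 < γ)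
    (hβγ : γ * (1 + σ) < β) (c : ℝ)
    (hc : 2 * Real.sqrt ((β - (1 + σ) * γ) / (1 + σ)) ≤ c) :
    ∃ I V : ℝ → ℝ, ContDiff ℝ 1 I ∧ ContDiff ℝ 1 V ∧
      (∀ y : ℝ, deriv I y = V y) ∧
      (∀ y : ℝ, deriv V y = -c * V y
          - β * I y * ((1 - I y - V y / c) / (1 + σ * (1 - I y - V y / c)) - γ / β)) ∧
      Filter.Tendsto (fun y : ℝ => (I y, V y)) Filter.atBot
        (nhds (1 - γ / (β - σ * γ), 0)) ∧
      Filter.Tendsto (fun y : ℝ => (I y, V y)) Filter.atTop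
        (nhds ((0 : ℝ), (0 : ℝ))) := by
  set P := SISReduced.ofSIS σ β γ c hσ hγ hβγ hc
  obtain ⟨Γ, hΓ₁, hΓ, hbot, htop⟩ := P.exists_heteroclinic
  have hG : Continuous fun p : ℝ × ℝ ↦ (p.1, c * (p.2 - p.1)) := by fun_prop
  refine ⟨fun y ↦ (Γ y).1, fun y ↦ c * ((Γ y).2 - (Γ y).1), contDiff_fst.comp hΓ₁,
    (contDiff_const.mul (contDiff_snd.sub contDiff_fst)).comp hΓ₁, fun y ↦ (hΓ y).2.fst.deriv,
    fun y ↦ ?_, by simpa [Function.comp_def, P, SISReduced.ofSIS] using (hG.tendsto _).comp hbot,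
    by simpa [Function.comp_def] using (hG.tendsto _).comp htop⟩
  have hV : HasDerivAt (fun y ↦ c * ((Γ y).2 - (Γ y).1))
      (c * ((P.field (Γ y)).2 - (P.field (Γ y)).1)) y :=
    ((hΓ y).2.snd.sub (hΓ y).2.fst).const_mul c
  rw [hV.deriv]
  exact P.c_mul_field_snd_sub_fst rfl rfl (hΓ y).1

/-- Lemma 1 (Case 3): for every σ ≥ 0, β, γ > 0 with β > γ(1+σ) and every speed
c ≥ 2√((β−(1+σ)γ)/(1+σ)), the reduced planar system `I' = V`,
`V' = −cV − βI((1−I−V/c)/(1+σ(1−I−V/c)) − γ/β)` has a heteroclinic orbit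
connecting the saddle Ā = (1−γ/(β−σγ), 0) at −∞ to the node B̄ = (0,0) at +∞. -/
theorem sis_planar_heteroclinic_case3
    (σ β γ : ℝ) (hσ : 0 ≤ σ) (hβ : 0 < β) (hγ : 0 < γ)
    (hβγ : γ * (1 + σ) < β) (c : ℝ)
    (hc : 2 * Real.sqrt ((β - (1 + σ) * γ) / (1 + σ)) ≤ c) :
    ∃ I V : ℝ → ℝ, ContDiff ℝ 1 I ∧ ContDiff ℝ 1 V ∧
      (∀ y : ℝ, deriv I y = V y) ∧
      (∀ y : ℝ, deriv V y = -c * V y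
          - β * I y * ((1 - I y - V y / c) / (1 + σ * (1 - I y - V y / c)) - γ / β)) ∧
      Filter.Tendsto (fun y : ℝ => (I y, V y)) Filter.atBot
        (nhds (1 - γ / (β - σ * γ), 0)) ∧
      Filter.Tendsto (fun y : ℝ => (I y, V y)) Filter.atTop
        (nhds ((0 : ℝ), (0 : ℝ))) :=
  sis_planar_heteroclinic_case3_general σ β γ hσ hγ hβγ c hc
end

section
/- Let σ ≥ 0, c > 0, and β, γ > 0 with β > γ(1+σ). Consider the planar vector field F(S, I) = (−c·(I + S − 1), −(β/c)·I·(S/(1+σS) − γ/β)). The derivative (Jacobian matrix) of F at the equilibrium Ã = (γ/(β−γσ), 1 − γ/(β−γσ)) has the two real eigenvalues λ₁ = (−c + √(c² + 4(β−σγ)(β−(1+σ)γ)/β))/2 and λ₂ = (−c − √(c² + 4(β−σγ)(β−(1+σ)γ)/β))/2, and λ₁ > 0 while λ₂ < 0, so Ã is a saddle. -/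
/-!
At the endemic equilibrium `S/(1+σS) = γ/β`, so the Jacobian of the vector field is
`[[-c, -c], [-k/c, 0]]` with `k = (β-σγ)(β-(1+σ)γ)/β`. Its characteristic polynomial is
`μ² + cμ - k`, whose roots are the two stated values; since `k > 0`, the discriminant
`c² + 4k` exceeds `c²`, so its square root exceeds `|c|` and the roots have opposite signs.
-/

theorem Module.End.hasEigenvalue_of_sq_sub_trace_mul_add_det_eq_zero {K : Type*} [Field K]
    (f : Module.End K (K × K)) {a b d e μ : K}
    (hf : ∀ x y, f (x, y) = (a * x + b * y, d * x + e * y)) (hb : b ≠ 0)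
    (hμ : μ ^ 2 - (a + e) * μ + (a * e - b * d) = 0) :
    f.HasEigenvalue μ := by
  refine Module.End.hasEigenvalue_of_hasEigenvector (x := (b, μ - a)) ⟨?_, ?_⟩
  · rw [Module.End.mem_eigenspace_iff, hf, Prod.smul_mk, smul_eq_mul, smul_eq_mul, Prod.mk.injEq]
    constructor
    · ring
    · linear_combination -hμ
  · simp [hb]

noncomputable def sisField (σ β γ c : ℝ) (p : ℝ × ℝ) : ℝ × ℝ :=
  (-c * (p.2 + p.1 - 1), -(β / c) * p.2 * (p.1 / (1 + σ * p.1) - γ / β))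

theorem fderiv_sisField_apply (σ β γ c : ℝ) {p : ℝ × ℝ} (hp : 1 + σ * p.1 ≠ 0) (x y : ℝ) :
    fderiv ℝ (sisField σ β γ c) p (x, y) =
      (-c * x + -c * y,
        -(β / c) * p.2 / (1 + σ * p.1) ^ 2 * x + -(β / c) * (p.1 / (1 + σ * p.1) - γ / β) * y) := by
  have hsat : HasDerivAt (fun s : ℝ => s / (1 + σ * s) - γ / β) (1 / (1 + σ * p.1) ^ 2) p.1 :=
    (((hasDerivAt_id' p.1).div (((hasDerivAt_id' p.1).const_mul σ).const_add 1) hp).sub_const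
      (γ / β)).congr_deriv (by field_simp; ring)
  have h : HasFDerivAt (sisField σ β γ c) _ p :=
    (((hasFDerivAt_snd.add hasFDerivAt_fst).sub_const 1).const_mul (-c)).prodMk
      ((hasFDerivAt_snd.const_mul (-(β / c))).mul
        (hsat.comp_hasFDerivAt p
          (hasFDerivAt_fst : HasFDerivAt Prod.fst (ContinuousLinearMap.fst ℝ ℝ ℝ) p)))
  rw [h.fderiv]
  simp only [ContinuousLinearMap.prod_apply, add_apply, smul_apply, ContinuousLinearMap.coe_fst',
    ContinuousLinearMap.coe_snd', smul_eq_mul, Prod.mk.injEq]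
  constructor <;> ring

theorem fderiv_sisField_endemic_apply {σ β γ : ℝ} (c : ℝ) (hβ : β ≠ 0) (hβσ : β - γ * σ ≠ 0)
    (x y : ℝ) :
    fderiv ℝ (sisField σ β γ c) (γ / (β - γ * σ), 1 - γ / (β - γ * σ)) (x, y) =
      (-c * x + -c * y, -((β - σ * γ) * (β - (1 + σ) * γ) / β / c) * x + 0 * y) := by
  have hden : 1 + σ * (γ / (β - γ * σ)) = β / (β - γ * σ) := by
    rw [eq_div_iff hβσ, add_mul, mul_assoc, div_mul_cancel₀ _ hβσ]; ring
  rw [fderiv_sisField_apply _ _ _ _ (by rw [hden]; exact div_ne_zero hβ hβσ), hden]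
  congr 1
  field_simp
  ring

theorem sis_case2_linearization_at_A_general
    (σ β γ c : ℝ) (hβ : 0 < β) (hγ : 0 < γ) (hc : 0 < c)
    (hβγ : γ * (1 + σ) < β)
    (F : ℝ × ℝ → ℝ × ℝ)
    (hF : F = fun p => (-c * (p.2 + p.1 - 1),
        -(β / c) * p.2 * (p.1 / (1 + σ * p.1) - γ / β))) :
    Module.End.HasEigenvalue
      (fderiv ℝ F (γ / (β - γ * σ), 1 - γ / (β - γ * σ))).toLinearMap
      ((-c + Real.sqrt (c ^ 2 + 4 * (β - σ * γ) * (β - (1 + σ) * γ) / β)) / 2) ∧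
    Module.End.HasEigenvalue
      (fderiv ℝ F (γ / (β - γ * σ), 1 - γ / (β - γ * σ))).toLinearMap
      ((-c - Real.sqrt (c ^ 2 + 4 * (β - σ * γ) * (β - (1 + σ) * γ) / β)) / 2) ∧
    0 < (-c + Real.sqrt (c ^ 2 + 4 * (β - σ * γ) * (β - (1 + σ) * γ) / β)) / 2 ∧
    (-c - Real.sqrt (c ^ 2 + 4 * (β - σ * γ) * (β - (1 + σ) * γ) / β)) / 2 < 0 := by
  obtain rfl : F = sisField σ β γ c := hF
  set k := (β - σ * γ) * (β - (1 + σ) * γ) / β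
  have hβσ : 0 < β - γ * σ := by linarith
  have hk : 0 < k := div_pos (mul_pos (by linarith) (by linarith)) hβ
  have hroot : ∀ μ, μ ^ 2 + c * μ - k = 0 → Module.End.HasEigenvalue
      (fderiv ℝ (sisField σ β γ c) (γ / (β - γ * σ), 1 - γ / (β - γ * σ))).toLinearMap μ :=
    fun μ hμ => Module.End.hasEigenvalue_of_sq_sub_trace_mul_add_det_eq_zero _
      (fderiv_sisField_endemic_apply c hβ.ne' hβσ.ne') (neg_ne_zero.2 hc.ne')
      (by linear_combination hμ - mul_div_cancel₀ k hc.ne')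
  have hdisc : c ^ 2 + 4 * (β - σ * γ) * (β - (1 + σ) * γ) / β = c ^ 2 + 4 * k := by ring
  have hsq : √(c ^ 2 + 4 * k) ^ 2 = c ^ 2 + 4 * k := Real.sq_sqrt (by positivity)
  have hc_lt : c < √(c ^ 2 + 4 * k) := Real.lt_sqrt_of_sq_lt (by linarith)
  have hneg_c_lt : -c < √(c ^ 2 + 4 * k) := Real.lt_sqrt_of_sq_lt (by rw [neg_sq]; linarith)
  rw [hdisc]
  exact ⟨hroot _ (by linear_combination hsq / 4), hroot _ (by linear_combination hsq / 4),
    by linarith, by linarith⟩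

/-- Linearization of the reduced planar system
`S' = −c(I+S−1)`, `I' = −(β/c)I(S/(1+σS) − γ/β)` at the endemic equilibrium
à = (γ/(β−γσ), 1−γ/(β−γσ)): its Jacobian has the real eigenvalues
`λ₁ = (−c + √(c² + 4(β−σγ)(β−(1+σ)γ)/β))/2` and
`λ₂ = (−c − √(c² + 4(β−σγ)(β−(1+σ)γ)/β))/2`, with λ₁ > 0 and λ₂ < 0
(so à is a saddle). -/
theorem sis_case2_linearization_at_A
    (σ β γ c : ℝ) (hσ : 0 ≤ σ) (hβ : 0 < β) (hγ : 0 < γ) (hc : 0 < c)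
    (hβγ : γ * (1 + σ) < β)
    (F : ℝ × ℝ → ℝ × ℝ)
    (hF : F = fun p => (-c * (p.2 + p.1 - 1),
        -(β / c) * p.2 * (p.1 / (1 + σ * p.1) - γ / β))) :
    Module.End.HasEigenvalue
      (fderiv ℝ F (γ / (β - γ * σ), 1 - γ / (β - γ * σ))).toLinearMap
      ((-c + Real.sqrt (c ^ 2 + 4 * (β - σ * γ) * (β - (1 + σ) * γ) / β)) / 2) ∧
    Module.End.HasEigenvalue
      (fderiv ℝ F (γ / (β - γ * σ), 1 - γ / (β - γ * σ))).toLinearMap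
      ((-c - Real.sqrt (c ^ 2 + 4 * (β - σ * γ) * (β - (1 + σ) * γ) / β)) / 2) ∧
    0 < (-c + Real.sqrt (c ^ 2 + 4 * (β - σ * γ) * (β - (1 + σ) * γ) / β)) / 2 ∧
    (-c - Real.sqrt (c ^ 2 + 4 * (β - σ * γ) * (β - (1 + σ) * γ) / β)) / 2 < 0 :=
  sis_case2_linearization_at_A_general σ β γ c hβ hγ hc hβγ F hF
end

section
/- Let σ ≥ 0, c > 0, and β, γ > 0 with β > γ(1+σ). Consider the planar vector field G(I, V) = (V, −c·V − β·I·((1 − I − V/c)/(1 + σ(1 − I − V/c)) − γ/β)). The derivative (Jacobian matrix) of G at the equilibrium Ā = (1 − γ/(β−γσ), 0) has the two real eigenvalues λ₁ = −c and λ₂ = (β − (1+σ)γ)(β − γσ)/(cβ), with λ₁ < 0 < λ₂, so Ā is a saddle. -/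
/-!
At `Ā` the incidence term `β I (S/(1+σS) − γ/β)` vanishes, so only the derivative of
`S ↦ S/(1+σS)` at `S = γ/(β−γσ)` survives and the Jacobian is the companion matrix
`[[0, 1], [K, K/c − c]]` with `K = (β−(1+σ)γ)(β−γσ)/β`. Its characteristic polynomial
`λ² − (K/c − c)λ − K = (λ + c)(λ − K/c)` has the roots `−c` and `K/c`.
-/

open ContinuousLinearMap Module.End

def planarCompanion (a b : ℝ) : ℝ × ℝ →L[ℝ] ℝ × ℝ :=
  (snd ℝ ℝ ℝ).prod (a • fst ℝ ℝ ℝ + b • snd ℝ ℝ ℝ)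

@[simp]
theorem planarCompanion_apply (a b : ℝ) (p : ℝ × ℝ) :
    planarCompanion a b p = (p.2, a * p.1 + b * p.2) := rfl

theorem hasEigenvalue_planarCompanion {a b l : ℝ} (h : l ^ 2 = a + b * l) :
    HasEigenvalue (planarCompanion a b).toLinearMap l :=
  hasEigenvalue_of_hasEigenvector (x := ((1 : ℝ), l))
    ⟨mem_eigenspace_iff.2 (by simp [Prod.ext_iff]; linarith), by simp [Prod.ext_iff]⟩

theorem hasEigenvalue_planarCompanion_neg {K c : ℝ} (hc : c ≠ 0) :
    HasEigenvalue (planarCompanion K (K / c - c)).toLinearMap (-c) :=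
  hasEigenvalue_planarCompanion (by field_simp; ring)

theorem hasEigenvalue_planarCompanion_div {K c : ℝ} (hc : c ≠ 0) :
    HasEigenvalue (planarCompanion K (K / c - c)).toLinearMap (K / c) :=
  hasEigenvalue_planarCompanion (by field_simp; ring)

noncomputable def travelingWaveField (c : ℝ) (φ : ℝ → ℝ) (p : ℝ × ℝ) : ℝ × ℝ :=
  (p.2, -c * p.2 - p.1 * φ (1 - p.1 - p.2 / c))

theorem hasFDerivAt_travelingWaveField {c x₀ φ' : ℝ} {φ : ℝ → ℝ}
    (hφ : HasDerivAt φ φ' (1 - x₀)) (hφ₀ : φ (1 - x₀) = 0) :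
    HasFDerivAt (travelingWaveField c φ)
      (planarCompanion (x₀ * φ') (x₀ * φ' / c - c)) (x₀, 0) := by
  have hfst : HasFDerivAt (fun p : ℝ × ℝ => p.1) (fst ℝ ℝ ℝ) (x₀, 0) := hasFDerivAt_fst
  have hsnd : HasFDerivAt (fun p : ℝ × ℝ => p.2) (snd ℝ ℝ ℝ) (x₀, 0) := hasFDerivAt_snd
  have hS := ((hasFDerivAt_const (1 : ℝ) (x₀, (0 : ℝ))).sub hfst).sub (hsnd.mul_const c⁻¹)
  have hφS := hφ.comp_hasFDerivAt_of_eq (x₀, (0 : ℝ)) hS (by simp)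
  have h₂ := (hsnd.const_mul (-c)).sub (hfst.mul hφS)
  refine (hsnd.prodMk h₂).congr_fderiv ?_
  ext <;> simp [hφ₀, div_eq_mul_inv]; ring

theorem hasDerivAt_div_one_add_mul {σ t : ℝ} (h : 1 + σ * t ≠ 0) :
    HasDerivAt (fun s : ℝ => s / (1 + σ * s)) (1 / (1 + σ * t) ^ 2) t :=
  ((hasDerivAt_id' t).div ((hasDerivAt_id' t).const_mul σ |>.const_add 1) h).congr_deriv
    (by ring)

theorem sis_case3_linearization_at_A_general
    (σ β γ c : ℝ) (hβ : 0 < β) (hγ : 0 < γ) (hc : 0 < c)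
    (hβγ : γ * (1 + σ) < β)
    (G : ℝ × ℝ → ℝ × ℝ)
    (hG : G = fun p => (p.2,
        -c * p.2 - β * p.1 * ((1 - p.1 - p.2 / c) / (1 + σ * (1 - p.1 - p.2 / c)) - γ / β))) :
    Module.End.HasEigenvalue
      (fderiv ℝ G (1 - γ / (β - γ * σ), (0 : ℝ))).toLinearMap (-c) ∧
    Module.End.HasEigenvalue
      (fderiv ℝ G (1 - γ / (β - γ * σ), (0 : ℝ))).toLinearMap
      ((β - (1 + σ) * γ) * (β - γ * σ) / (c * β)) ∧
    (-c < 0) ∧ (0 < (β - (1 + σ) * γ) * (β - γ * σ) / (c * β)) := by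
  have hG' : G = travelingWaveField c fun s => β * (s / (1 + σ * s) - γ / β) := by
    rw [hG]; ext p <;> simp only [travelingWaveField]; ring
  -- Substituting `β = d + γσ` turns every denominator into a visibly positive expression.
  obtain ⟨d, hd, rfl⟩ : ∃ d, 0 < d ∧ β = d + γ * σ := ⟨β - γ * σ, by nlinarith, by ring⟩
  simp only [add_sub_cancel_right] at hG' ⊢
  have hu : 1 + σ * (γ / d) = (d + γ * σ) / d := by field_simp
  have hφ : HasDerivAt (fun s => (d + γ * σ) * (s / (1 + σ * s) - γ / (d + γ * σ)))
      ((d + γ * σ) * (1 / (1 + σ * (γ / d)) ^ 2)) (1 - (1 - γ / d)) := by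
    rw [sub_sub_cancel]
    exact ((hasDerivAt_div_one_add_mul (by rw [hu]; positivity)).sub_const _).const_mul _
  have hφ₀ : (d + γ * σ) * ((1 - (1 - γ / d)) / (1 + σ * (1 - (1 - γ / d)))
      - γ / (d + γ * σ)) = 0 := by
    rw [sub_sub_cancel, hu]; field_simp; ring
  have hK : (1 - γ / d) * ((d + γ * σ) * (1 / (1 + σ * (γ / d)) ^ 2)) / c
      = (d + γ * σ - (1 + σ) * γ) * d / (c * (d + γ * σ)) := by
    rw [hu]; field_simp; ring
  rw [hG', (hasFDerivAt_travelingWaveField hφ hφ₀).fderiv, ← hK]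
  have hgap : 0 < d + γ * σ - (1 + σ) * γ := by linarith
  exact ⟨hasEigenvalue_planarCompanion_neg hc.ne', hasEigenvalue_planarCompanion_div hc.ne',
    neg_neg_of_pos hc, hK ▸ by positivity⟩

/-- Linearization of the reduced planar system
`I' = V`, `V' = −cV − βI((1−I−V/c)/(1+σ(1−I−V/c)) − γ/β)` at the equilibrium
Ā = (1−γ/(β−γσ), 0): its Jacobian has the real eigenvalues `λ₁ = −c` and
`λ₂ = (β−(1+σ)γ)(β−γσ)/(cβ)`, with λ₁ < 0 < λ₂ (so Ā is a saddle). -/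
theorem sis_case3_linearization_at_A
    (σ β γ c : ℝ) (hσ : 0 ≤ σ) (hβ : 0 < β) (hγ : 0 < γ) (hc : 0 < c)
    (hβγ : γ * (1 + σ) < β)
    (G : ℝ × ℝ → ℝ × ℝ)
    (hG : G = fun p => (p.2,
        -c * p.2 - β * p.1 * ((1 - p.1 - p.2 / c) / (1 + σ * (1 - p.1 - p.2 / c)) - γ / β))) :
    Module.End.HasEigenvalue
      (fderiv ℝ G (1 - γ / (β - γ * σ), (0 : ℝ))).toLinearMap (-c) ∧
    Module.End.HasEigenvalue
      (fderiv ℝ G (1 - γ / (β - γ * σ), (0 : ℝ))).toLinearMap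
      ((β - (1 + σ) * γ) * (β - γ * σ) / (c * β)) ∧
    (-c < 0) ∧ (0 < (β - (1 + σ) * γ) * (β - γ * σ) / (c * β)) :=
  sis_case3_linearization_at_A_general σ β γ c hβ hγ hc hβγ G hG
end

section
/- Let σ ≥ 0 and β, γ > 0 with β > γ(1+σ), let c satisfy c ≥ 2·√((β − (1+σ)γ)/(1+σ)), set p = 1 − γ/(β−γσ), and let r be any real number with (c − √(c² − 4(β−(1+σ)γ)/(1+σ)))/2 < r < (c + √(c² − 4(β−(1+σ)γ)/(1+σ)))/2. Then for every t ∈ (0, 1): r² − c·r + β·((c + t·p·(r − c))/(c + σ·(c + t·p·(r − c))) − γ/β) < 0. (This sign condition means the vector field of the reduced planar system points strictly into the triangle △ĀB̄M along its slanted side V = −rI, establishing the trapping region in the case of fast-diffusing infected population.) -/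
/-! Write `q = (β - (1+σ)γ)/(1+σ)`. Since `r` lies strictly between the roots of
`X² - cX + q`, we have `r² - cr + q < 0`, and both roots lie in `[0, c]`. The point
`x = c + tp(r - c)` is a convex combination of `r` and `c`, so `0 < x ≤ c`; as
`x ↦ x/(c + σx)` increases to its value `1/(1+σ)` at `x = c`, the infection term
`β(x/(c + σx) - γ/β)` is at most `β/(1+σ) - γ = q`. -/

open Real Set

lemma quadratic_neg_of_between_roots {c q r : ℝ}
    (hr₁ : (c - √(c ^ 2 - 4 * q)) / 2 < r) (hr₂ : r < (c + √(c ^ 2 - 4 * q)) / 2) :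
    r ^ 2 - c * r + q < 0 := by
  have hs : 0 < √(c ^ 2 - 4 * q) := by linarith
  have hsq := sq_sqrt (sqrt_pos.mp hs).le
  nlinarith

lemma between_roots_mem_Ioo {c q r : ℝ} (hq : 0 ≤ q) (hc : 0 ≤ c)
    (hr₁ : (c - √(c ^ 2 - 4 * q)) / 2 < r) (hr₂ : r < (c + √(c ^ 2 - 4 * q)) / 2) :
    r ∈ Ioo 0 c := by
  have hs : √(c ^ 2 - 4 * q) ≤ c := sqrt_le_iff.mpr ⟨hc, by linarith⟩
  constructor <;> linarith

lemma one_sub_div_sub_mem_Icc {β γ σ : ℝ} (hγ : 0 < γ) (hβγ : γ * (1 + σ) ≤ β) :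
    1 - γ / (β - γ * σ) ∈ Icc 0 1 := by
  have hden : γ ≤ β - γ * σ := by linarith
  have hle : γ / (β - γ * σ) ≤ 1 := (div_le_one (hγ.trans_le hden)).mpr hden
  have hnonneg : 0 ≤ γ / (β - γ * σ) := div_nonneg hγ.le (hγ.le.trans hden)
  constructor <;> linarith

lemma div_add_mul_le_one_div_one_add {σ c x : ℝ} (hσ : 0 ≤ σ) (hx : 0 < x) (hxc : x ≤ c) :
    x / (c + σ * x) ≤ 1 / (1 + σ) := by
  rw [div_le_div_iff₀ (add_pos_of_pos_of_nonneg (hx.trans_le hxc) (by positivity))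
    (by positivity)]
  linarith

lemma mul_div_add_mul_sub_div_le {σ β γ c x : ℝ} (hσ : 0 ≤ σ) (hβ : 0 < β)
    (hx : 0 < x) (hxc : x ≤ c) :
    β * (x / (c + σ * x) - γ / β) ≤ (β - (1 + σ) * γ) / (1 + σ) := by
  have hsat := mul_le_mul_of_nonneg_left (div_add_mul_le_one_div_one_add hσ hx hxc) hβ.le
  have hq : (β - (1 + σ) * γ) / (1 + σ) = β * (1 / (1 + σ)) - γ := by
    field_simp
  rw [hq, mul_sub, mul_div_cancel₀ γ hβ.ne']
  linarith

theorem sis_case3_slanted_side_inequality_general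
    (σ β γ c p r : ℝ) (hσ : 0 ≤ σ) (hγ : 0 < γ)
    (hβγ : γ * (1 + σ) < β)
    (hc : 2 * Real.sqrt ((β - (1 + σ) * γ) / (1 + σ)) ≤ c)
    (hp : p = 1 - γ / (β - γ * σ))
    (hr₁ : (c - Real.sqrt (c ^ 2 - 4 * (β - (1 + σ) * γ) / (1 + σ))) / 2 < r)
    (hr₂ : r < (c + Real.sqrt (c ^ 2 - 4 * (β - (1 + σ) * γ) / (1 + σ))) / 2) :
    ∀ t ∈ Set.Ioo (0 : ℝ) 1,
      r ^ 2 - c * r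
        + β * ((c + t * p * (r - c)) / (c + σ * (c + t * p * (r - c))) - γ / β)
        < 0 := by
  rintro t ⟨ht0, ht1⟩
  rw [mul_div_assoc] at hr₁ hr₂
  set q := (β - (1 + σ) * γ) / (1 + σ)
  have hq : 0 ≤ q := div_nonneg (by linarith) (by linarith)
  have hc0 : 0 ≤ c := le_trans (by positivity) hc
  have hquad := quadratic_neg_of_between_roots hr₁ hr₂
  obtain ⟨hr0, hrc⟩ := between_roots_mem_Ioo hq hc0 hr₁ hr₂
  obtain ⟨hp0, hp1⟩ := hp ▸ one_sub_div_sub_mem_Icc hγ hβγ.le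
  have htp : t * p ≤ 1 := mul_le_one₀ ht1.le hp0 hp1
  have hxr : r ≤ c + t * p * (r - c) := by
    linarith [mul_nonneg (sub_nonneg.mpr htp) (sub_nonneg.mpr hrc.le)]
  have hxc : c + t * p * (r - c) ≤ c := by
    linarith [mul_nonpos_of_nonneg_of_nonpos (mul_nonneg ht0.le hp0) (sub_nonpos.mpr hrc.le)]
  have hβ : 0 < β := (mul_nonneg hγ.le (by linarith)).trans_lt hβγ
  linarith [mul_div_add_mul_sub_div_le (γ := γ) hσ hβ (hr0.trans_le hxr) hxc]

/-- The trapping-region inequality along the slanted side of the triangle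
△ĀB̄M in the fast-infected-diffusion regime: for β > γ(1+σ),
c ≥ 2√((β−(1+σ)γ)/(1+σ)), p = 1 − γ/(β−γσ), and any slope r strictly between
the two roots (c ∓ √(c² − 4(β−(1+σ)γ)/(1+σ)))/2, one has, for every t ∈ (0,1),
`r² − cr + β((c + tp(r−c))/(c + σ(c + tp(r−c))) − γ/β) < 0`. -/
theorem sis_case3_slanted_side_inequality
    (σ β γ c p r : ℝ) (hσ : 0 ≤ σ) (hβ : 0 < β) (hγ : 0 < γ)
    (hβγ : γ * (1 + σ) < β)
    (hc : 2 * Real.sqrt ((β - (1 + σ) * γ) / (1 + σ)) ≤ c)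
    (hp : p = 1 - γ / (β - γ * σ))
    (hr₁ : (c - Real.sqrt (c ^ 2 - 4 * (β - (1 + σ) * γ) / (1 + σ))) / 2 < r)
    (hr₂ : r < (c + Real.sqrt (c ^ 2 - 4 * (β - (1 + σ) * γ) / (1 + σ))) / 2) :
    ∀ t ∈ Set.Ioo (0 : ℝ) 1,
      r ^ 2 - c * r
        + β * ((c + t * p * (r - c)) / (c + σ * (c + t * p * (r - c))) - γ / β)
        < 0 :=
  sis_case3_slanted_side_inequality_general σ β γ c p r hσ hγ hβγ hc hp hr₁ hr₂
end
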